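/- Let Γ be an abelian group, R = ℤ[Γ] its integral group ring (a commutative ring). Let a_{ij} ∈ R and h_{ij} ∈ Γ be given for every edge (i,j) ∈ E, and let Δ be the n×n matrix over R with Δ_{ij} = −[h_{ij}]·a_{ij} for i ≠ j (where [g] denotes the image of g ∈ Γ in ℤ[Γ]) and Δ_{ii} = Σ_{j≠i} a_{ij}. Then det Δ_[m] = Σ_{F ∈ ℱ→_m} a_F · ∏_{c ∈ 𝒞(F)} (1 − [h_c]), an identity in ℤ[Γ]. -/

import Mathlib

/-!
In the Leibniz expansion of `det Δ_[m]`, expanding each diagonal entry `Δ_ii = ∑_{k ≠ i} a_ik`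
indexes the terms by a forest `f : U → V` together with a permutation `σ` of `U` that agrees
with `f` wherever it moves a point. Such `σ` are exactly the products of a subset of the cycles
of `f`, i.e. the permutations whose cycle factors are among those of the permutation `f` induces
on its periodic points. A cycle `c` of length `ℓ` contributes
`sign c · ∏_{e ∈ c} (-[h_e]) = -(-1)^ℓ · (-1)^ℓ [h_c] = -[h_c]`, and summing over subsets of
cycles gives `∏_c (1 - [h_c])`.
-/

open Finset Function

/-- `x` is the canonical (`enc`-minimal) point on a nontrivial cycle of `g`. -/
def IsCycleRep {V : Type*} (enc : V → ℕ) (g : V → V) (x : V) : Prop :=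
  2 ≤ minimalPeriod g x ∧ ∀ t : ℕ, enc x ≤ enc (g^[t] x)

/-- The canonical representatives of the (nontrivial) cycles of `g`. -/
noncomputable def cycleReps {V : Type*} [Fintype V] (enc : V → ℕ) (g : V → V) : Finset V :=
  @Finset.filter V (IsCycleRep enc g) (Classical.decPred _) Finset.univ

/-- Extension of `f : U → V` to all of `V = {1,…,n}`, fixing the well pointwise. -/
def extFun {n m : ℕ} (hmn : m ≤ n) (f : Fin m → Fin n) : Fin n → Fin n :=
  fun j => if h : (j : ℕ) < m then f ⟨(j : ℕ), h⟩ else j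

namespace Equiv.Perm

variable {α R : Type*} [Fintype α] [DecidableEq α]

def AgreesOnSupport (σ : Perm α) (g : α → α) : Prop :=
  ∀ x, σ x ≠ x → σ x = g x

instance (g : α → α) : DecidablePred (fun σ : Perm α => σ.AgreesOnSupport g) :=
  fun σ => by unfold AgreesOnSupport; infer_instance

theorem agreesOnSupport_iff_cycleFactorsFinset_subset {σ τ : Perm α} :
    σ.AgreesOnSupport τ ↔ σ.cycleFactorsFinset ⊆ τ.cycleFactorsFinset := by
  constructor
  · intro h c hc
    rw [mem_cycleFactorsFinset_iff] at hc ⊢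
    refine ⟨hc.1, fun x hx => ?_⟩
    rw [hc.2 x hx]
    exact h x (hc.2 x hx ▸ mem_support.mp hx)
  · intro h x hx
    have hcyc := h (cycleOf_mem_cycleFactorsFinset_iff.mpr (mem_support.mpr hx))
    rw [← cycleOf_apply_self σ x]
    exact (mem_cycleFactorsFinset_iff.mp hcyc).2 x
      (mem_support_cycleOf_iff.mpr ⟨SameCycle.refl _ _, mem_support.mpr hx⟩)

theorem prod_ite_eq_ite_forall_support [CommMonoidWithZero R] (σ : Perm α) (P : α → Prop)
    [DecidablePred P] (y : α → R) :
    ∏ i, (if σ i = i then 1 else if P i then y i else 0) =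
      if ∀ i, σ i ≠ i → P i then ∏ i ∈ σ.support, y i else 0 := by
  split_ifs with h
  · refine (prod_subset (subset_univ _) fun i _ hi => ?_).symm.trans
      (prod_congr rfl fun i hi => ?_)
    · rw [if_pos (Perm.notMem_support.mp hi)]
    · rw [if_neg (Perm.mem_support.mp hi), if_pos (h i (Perm.mem_support.mp hi))]
  · push Not at h
    obtain ⟨i, hi, hPi⟩ := h
    exact prod_eq_zero (mem_univ i) (by rw [if_neg hi, if_neg hPi])

section Weight

variable [CommRing R]

def permWeight (w : α → R) (σ : Perm α) : R :=
  sign σ • ∏ x ∈ σ.support, -w x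

theorem permWeight_one (w : α → R) : permWeight w 1 = 1 := by
  simp [permWeight]

theorem Disjoint.permWeight_mul (w : α → R) {σ τ : Perm α} (h : σ.Disjoint τ) :
    permWeight w (σ * τ) = permWeight w σ * permWeight w τ := by
  rw [permWeight, permWeight, permWeight, h.support_mul,
    prod_union (disjoint_iff_disjoint_support.mp h), sign_mul, smul_mul_smul_comm,
    mul_comm (sign σ)]

theorem IsCycle.permWeight {w : α → R} {c : Perm α} (hc : c.IsCycle) :
    permWeight w c = -∏ x ∈ c.support, w x := by
  rw [Equiv.Perm.permWeight, hc.sign, prod_neg, Units.smul_def, ← smul_mul_assoc]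
  simp [← mul_pow]

theorem permWeight_eq_prod_cycleFactorsFinset (w : α → R) (σ : Perm α) :
    permWeight w σ = ∏ c ∈ σ.cycleFactorsFinset, permWeight w c := by
  induction σ using cycle_induction_on with
  | base_one => rw [cycleFactorsFinset_one, prod_empty, permWeight_one]
  | base_cycles c hc => rw [hc.cycleFactorsFinset_eq_singleton, prod_singleton]
  | induction_disjoint σ τ hd _ hσ hτ =>
    rw [hd.cycleFactorsFinset_mul_eq_union, prod_union hd.disjoint_cycleFactorsFinset,
      hd.permWeight_mul, hσ, hτ]

theorem sum_permWeight_of_cycleFactorsFinset_subset (w : α → R) (τ : Perm α) :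
    ∑ σ ∈ univ.filter (fun σ : Perm α => σ.cycleFactorsFinset ⊆ τ.cycleFactorsFinset),
      permWeight w σ = ∏ c ∈ τ.cycleFactorsFinset, (1 + permWeight w c) := by
  rw [prod_one_add]
  refine sum_bij (fun σ _ => σ.cycleFactorsFinset)
    (fun σ hσ => mem_powerset.mpr (mem_filter.mp hσ).2)
    (fun σ _ σ' _ h => cycleFactorsFinset_injective h) (fun T hT => ?_)
    (fun σ _ => permWeight_eq_prod_cycleFactorsFinset w σ)
  have hT := mem_powerset.mp hT
  have hdisj : (T : Set (Perm α)).Pairwise Disjoint :=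
    (cycleFactorsFinset_pairwise_disjoint τ).mono (coe_subset.mpr hT)
  have hfac : (T.noncommProd id (hdisj.mono' fun _ _ => Disjoint.commute)).cycleFactorsFinset = T :=
    cycleFactorsFinset_eq_finset.mpr
      ⟨fun c hc => (mem_cycleFactorsFinset_iff.mp (hT hc)).1, hdisj, rfl⟩
  exact ⟨_, mem_filter.mpr ⟨mem_univ _, by rwa [hfac]⟩, hfac⟩

end Weight

end Equiv.Perm

theorem mem_cycleReps {V : Type*} [Fintype V] {enc : V → ℕ} {g : V → V} {x : V} :
    x ∈ cycleReps enc g ↔ IsCycleRep enc g x := by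
  simp [cycleReps]

section CyclicPart

open Equiv Equiv.Perm

variable {V R : Type*} (g : V → V)

open Classical in
noncomputable def cyclicPart : Perm V :=
  ofSubtype ((bijOn_periodicPts (f := g)).equiv g)

variable {g}

open Classical in
theorem cyclicPart_apply_of_mem {x : V} (hx : x ∈ periodicPts g) : cyclicPart g x = g x := by
  rw [cyclicPart, ofSubtype_apply_of_mem _ hx]
  rfl

open Classical in
theorem cyclicPart_apply_of_notMem {x : V} (hx : x ∉ periodicPts g) : cyclicPart g x = x := by
  rw [cyclicPart, ofSubtype_apply_of_not_mem _ hx]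

theorem cyclicPart_pow_apply {x : V} (hx : x ∈ periodicPts g) (k : ℕ) :
    (cyclicPart g ^ k) x = g^[k] x := by
  induction k with
  | zero => rfl
  | succ k ih =>
    rw [pow_succ', mul_apply, ih, iterate_succ_apply',
      cyclicPart_apply_of_mem ((bijOn_periodicPts (f := g)).mapsTo.iterate k hx)]

theorem IsCycleRep.le_of_sameCycle [Finite V] {enc : V → ℕ} {r y : V} (hr : IsCycleRep enc g r)
    (hy : (cyclicPart g).SameCycle r y) : enc r ≤ enc y := by
  obtain ⟨k, rfl⟩ := hy.exists_nat_pow_eq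
  rw [cyclicPart_pow_apply (minimalPeriod_pos_iff_mem_periodicPts.mp (by have := hr.1; omega))]
  exact hr.2 k

variable [Fintype V] [DecidableEq V]

theorem mem_support_cyclicPart {x : V} :
    x ∈ (cyclicPart g).support ↔ 2 ≤ minimalPeriod g x := by
  rw [Perm.mem_support]
  by_cases hx : x ∈ periodicPts g
  · have hpos := minimalPeriod_pos_of_mem_periodicPts hx
    rw [cyclicPart_apply_of_mem hx, show g x ≠ x ↔ ¬IsFixedPt g x from Iff.rfl,
      ← minimalPeriod_eq_one_iff_isFixedPt]
    omega
  · simp [cyclicPart_apply_of_notMem hx, minimalPeriod_eq_zero_of_notMem_periodicPts hx]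

theorem iterate_mem_support_cycleOf_cyclicPart {x : V} (hx : 2 ≤ minimalPeriod g x) (k : ℕ) :
    g^[k] x ∈ ((cyclicPart g).cycleOf x).support := by
  rw [← cyclicPart_pow_apply (minimalPeriod_pos_iff_mem_periodicPts.mp (by omega)),
    mem_support_cycleOf_iff]
  exact ⟨sameCycle_pow_right.mpr (SameCycle.refl _ _), mem_support_cyclicPart.mpr hx⟩

theorem agreesOnSupport_cyclicPart_iff {σ : Perm V} :
    σ.AgreesOnSupport (cyclicPart g) ↔ σ.AgreesOnSupport g := by
  constructor
  · intro h x hx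
    by_cases hp : x ∈ periodicPts g
    · rw [h x hx, cyclicPart_apply_of_mem hp]
    · exact absurd (h x hx) (by rwa [cyclicPart_apply_of_notMem hp])
  · intro h x hx
    have hiter : ∀ k, g^[k] x = (σ ^ k) x := by
      intro k
      induction k with
      | zero => rfl
      | succ k ih =>
        rw [iterate_succ_apply', ih, pow_succ', mul_apply,
          h _ (Perm.mem_support.mp (pow_apply_mem_support.mpr (Perm.mem_support.mpr hx)))]
    have hp : x ∈ periodicPts g := mk_mem_periodicPts (orderOf_pos σ)
      (by rw [IsPeriodicPt, IsFixedPt, hiter, pow_orderOf_eq_one, one_apply])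
    rw [h x hx, cyclicPart_apply_of_mem hp]

theorem prod_support_cycleOf_cyclicPart [CommMonoid R] (w : V → R) {x : V}
    (hx : 2 ≤ minimalPeriod g x) :
    ∏ y ∈ ((cyclicPart g).cycleOf x).support, w y =
      ∏ t ∈ range (minimalPeriod g x), w (g^[t] x) := by
  refine (prod_nbij (g^[·] x) (fun t _ => iterate_mem_support_cycleOf_cyclicPart hx t)
    (fun s hs t ht hst =>
      iterate_injOn_Iio_minimalPeriod (by simpa using hs) (by simpa using ht) hst)
    (fun y hy => ?_) (fun _ _ => rfl)).symm
  obtain ⟨k, rfl⟩ := (mem_support_cycleOf_iff.mp hy).1.exists_nat_pow_eq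
  refine ⟨k % minimalPeriod g x, by simp [Nat.mod_lt _ (by omega : 0 < minimalPeriod g x)], ?_⟩
  show g^[k % _] x = _
  rw [iterate_mod_minimalPeriod_eq,
    cyclicPart_pow_apply (minimalPeriod_pos_iff_mem_periodicPts.mp (by omega))]

theorem prod_cycleFactorsFinset_cyclicPart [CommMonoid R] {enc : V → ℕ} (henc : Injective enc)
    (F : Perm V → R) :
    ∏ c ∈ (cyclicPart g).cycleFactorsFinset, F c =
      ∏ r ∈ cycleReps enc g, F ((cyclicPart g).cycleOf r) := by
  refine (prod_nbij (fun r => (cyclicPart g).cycleOf r) (fun r hr => ?_)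
    (fun r hr r' hr' (hrr' : (cyclicPart g).cycleOf r = (cyclicPart g).cycleOf r') => ?_)
    (fun c hc => ?_) (fun _ _ => rfl)).symm
  · exact cycleOf_mem_cycleFactorsFinset_iff.mpr
      (mem_support_cyclicPart.mpr (mem_cycleReps.mp hr).1)
  · have hr := mem_cycleReps.mp hr
    have hr' := mem_cycleReps.mp hr'
    have hr'mem : r' ∈ ((cyclicPart g).cycleOf r).support :=
      hrr' ▸ iterate_mem_support_cycleOf_cyclicPart hr'.1 0
    have hsame : (cyclicPart g).SameCycle r r' := (mem_support_cycleOf_iff.mp hr'mem).1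
    exact henc (le_antisymm (hr.le_of_sameCycle hsame) (hr'.le_of_sameCycle hsame.symm))
  · have hc' := mem_coe.mp hc
    obtain ⟨r, hr, hmin⟩ :=
      exists_min_image c.support enc (mem_cycleFactorsFinset_iff.mp hc').1.nonempty_support
    have hcr : c = (cyclicPart g).cycleOf r := cycle_is_cycleOf hr hc'
    have hr2 : 2 ≤ minimalPeriod g r :=
      mem_support_cyclicPart.mp (mem_cycleFactorsFinset_support_le hc' hr)
    refine ⟨r, mem_cycleReps.mpr ⟨hr2, fun t => hmin _ ?_⟩, hcr.symm⟩
    rw [hcr]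
    exact iterate_mem_support_cycleOf_cyclicPart hr2 t

theorem sum_permWeight_agreesOnSupport [CommRing R] {enc : V → ℕ} (henc : Injective enc)
    (w : V → R) :
    ∑ σ ∈ univ.filter (fun σ : Perm V => σ.AgreesOnSupport g), permWeight w σ =
      ∏ r ∈ cycleReps enc g, (1 - ∏ t ∈ range (minimalPeriod g r), w (g^[t] r)) := by
  have hfilter : univ.filter (fun σ : Perm V => σ.AgreesOnSupport g) = univ.filter
      (fun σ : Perm V => σ.cycleFactorsFinset ⊆ (cyclicPart g).cycleFactorsFinset) := by
    ext σ
    rw [mem_filter, mem_filter, ← agreesOnSupport_cyclicPart_iff,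
      agreesOnSupport_iff_cycleFactorsFinset_subset]
  rw [hfilter, sum_permWeight_of_cycleFactorsFinset_subset,
    prod_cycleFactorsFinset_cyclicPart henc]
  refine prod_congr rfl fun r hr => ?_
  have hr2 := (mem_cycleReps.mp hr).1
  rw [(isCycle_cycleOf _ (Perm.mem_support.mp (mem_support_cyclicPart.mpr hr2))).permWeight,
    prod_support_cycleOf_cyclicPart w hr2, sub_eq_add_neg]

end CyclicPart

section Embedding

open Equiv Equiv.Perm

variable {ι V R : Type*} [Fintype ι] [DecidableEq V] (e : ι ↪ V)

theorem support_viaFintypeEmbedding [DecidableEq ι] [Fintype V] (σ : Perm ι) :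
    (σ.viaFintypeEmbedding e).support = σ.support.map e := by
  ext x
  by_cases hx : x ∈ Set.range e
  · obtain ⟨i, rfl⟩ := hx
    simp [viaFintypeEmbedding_apply_image]
  · rw [Perm.mem_support, viaFintypeEmbedding_apply_notMem_range _ _ hx]
    simp only [ne_eq, not_true_eq_false, false_iff, mem_map]
    rintro ⟨i, -, rfl⟩
    exact hx ⟨i, rfl⟩

theorem permWeight_viaFintypeEmbedding [DecidableEq ι] [Fintype V] [CommRing R] (w : V → R)
    (σ : Perm ι) :
    permWeight w (σ.viaFintypeEmbedding e) = permWeight (w ∘ e) σ := by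
  rw [permWeight, permWeight, viaFintypeEmbedding_sign, support_viaFintypeEmbedding, prod_map]
  rfl

theorem agreesOnSupport_viaFintypeEmbedding_iff {σ : Perm ι} {G : V → V} :
    (σ.viaFintypeEmbedding e).AgreesOnSupport G ↔ ∀ i, σ i ≠ i → e (σ i) = G (e i) := by
  constructor
  · intro h i hi
    rw [← viaFintypeEmbedding_apply_image]
    exact h _ (by rwa [viaFintypeEmbedding_apply_image, e.injective.ne_iff])
  · intro h x hx
    by_cases hxe : x ∈ Set.range e
    · obtain ⟨i, rfl⟩ := hxe
      rw [viaFintypeEmbedding_apply_image] at hx ⊢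
      exact h i (fun hi => hx (by rw [hi]))
    · exact absurd (viaFintypeEmbedding_apply_notMem_range _ _ hxe) hx

theorem exists_viaFintypeEmbedding_eq {τ : Perm V} (hτ : ∀ x ∉ Set.range e, τ x = x) :
    ∃ σ : Perm ι, σ.viaFintypeEmbedding e = τ := by
  have hmaps : ∀ i, τ (e i) ∈ Set.range e := fun i => by
    by_contra h
    exact h ⟨i, (τ.injective (hτ _ h)).symm⟩
  choose s hs using hmaps
  have hinj : Injective s := fun i j hij => e.injective (τ.injective (by rw [← hs, ← hs, hij]))
  refine ⟨Equiv.ofBijective s (Finite.injective_iff_bijective.mp hinj), Equiv.ext fun x => ?_⟩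
  by_cases hx : x ∈ Set.range e
  · obtain ⟨i, rfl⟩ := hx
    rw [viaFintypeEmbedding_apply_image, Equiv.ofBijective_apply, hs]
  · rw [viaFintypeEmbedding_apply_notMem_range _ _ hx, hτ x hx]

theorem sum_permWeight_viaFintypeEmbedding [DecidableEq ι] [Fintype V] [CommRing R]
    (c : V → V → R) {p : ι → V} {G : V → V} (hGe : ∀ i, G (e i) = p i)
    (hG : ∀ x ∉ Set.range e, G x = x) :
    ∑ σ ∈ univ.filter (fun σ : Perm ι => ∀ i, σ i ≠ i → e (σ i) = p i),
        permWeight (fun i => c (e i) (p i)) σ =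
      ∑ τ ∈ univ.filter (fun τ : Perm V => τ.AgreesOnSupport G),
        permWeight (fun x => c x (G x)) τ := by
  refine sum_nbij (viaFintypeEmbedding · e) (fun σ hσ => ?_) (fun σ _ σ' _ h => ?_)
    (fun τ hτ => ?_) (fun σ _ => ?_)
  · refine mem_filter.mpr ⟨mem_univ _, (agreesOnSupport_viaFintypeEmbedding_iff e).mpr ?_⟩
    exact fun i hi => ((mem_filter.mp hσ).2 i hi).trans (hGe i).symm
  · ext i
    simp only at h
    rw [← e.injective.eq_iff, ← viaFintypeEmbedding_apply_image, h,
      viaFintypeEmbedding_apply_image]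
  · have hτ : τ.AgreesOnSupport G := (mem_filter.mp (mem_coe.mp hτ)).2
    obtain ⟨σ, rfl⟩ := exists_viaFintypeEmbedding_eq e (τ := τ) fun x hx => by
      by_contra hne
      exact hne ((hτ x hne).trans (hG x hx))
    refine ⟨σ, mem_filter.mpr ⟨mem_univ _, fun i hi => ?_⟩, rfl⟩
    rw [(agreesOnSupport_viaFintypeEmbedding_iff e).mp hτ i hi, hGe]
  · simp only [permWeight_viaFintypeEmbedding, comp_def, hGe]

end Embedding

section Laplacian

open Equiv Equiv.Perm Matrix

variable {ι V R : Type*} [DecidableEq ι] [Fintype V] [DecidableEq V] [CommRing R]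

def holonomyLaplacian (a c : V → V → R) : Matrix V V R :=
  of fun i j => if i = j then ∑ k ∈ univ.filter fun k => k ≠ i, a i k else -(c i j * a i j)

theorem holonomyLaplacian_apply_eq_sum (a c : V → V → R) {e : ι → V} (he : Injective e)
    (σ : Perm ι) (i : ι) :
    holonomyLaplacian a c (e i) (e (σ i)) =
      ∑ k ∈ univ.filter (fun k => k ≠ e i),
        (if σ i = i then 1 else if e (σ i) = k then -c (e i) k else 0) * a (e i) k := by
  by_cases hi : σ i = i
  · simp [holonomyLaplacian, hi]
  · have hne : e (σ i) ≠ e i := he.ne hi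
    simp only [holonomyLaplacian, of_apply, if_neg hne.symm, if_neg hi, ite_mul, zero_mul,
      sum_ite_eq, mem_filter, mem_univ, true_and, if_pos hne]
    ring

theorem det_submatrix_holonomyLaplacian [Fintype ι] (a c : V → V → R) {e : ι → V}
    (he : Injective e) :
    ((holonomyLaplacian a c).submatrix e e).det =
      ∑ p : {p : ι → V // ∀ i, p i ≠ e i}, (∏ i, a (e i) (p.1 i)) *
        ∑ σ ∈ univ.filter (fun σ : Perm ι => ∀ i, σ i ≠ i → e (σ i) = p.1 i),
          permWeight (fun i => c (e i) (p.1 i)) σ := by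
  have hmem : ∀ p : ι → V,
      p ∈ Fintype.piFinset (fun i => univ.filter fun k => k ≠ e i) ↔ ∀ i, p i ≠ e i := by
    simp [Fintype.mem_piFinset]
  rw [← det_transpose, det_apply]
  simp only [transpose_apply, submatrix_apply, holonomyLaplacian_apply_eq_sum a c he, prod_univ_sum,
    prod_mul_distrib, prod_ite_eq_ite_forall_support, smul_sum]
  rw [sum_comm]
  refine Eq.trans ?_ (sum_subtype _ hmem fun p => (∏ i, a (e i) (p i)) *
    ∑ σ ∈ univ.filter (fun σ : Perm ι => ∀ i, σ i ≠ i → e (σ i) = p i),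
      permWeight (fun i => c (e i) (p i)) σ)
  refine sum_congr rfl fun p _ => ?_
  rw [mul_sum, sum_filter]
  refine sum_congr rfl fun σ _ => ?_
  split_ifs
  · rw [permWeight, mul_smul_comm, mul_comm]
  · rw [zero_mul, smul_zero]

end Laplacian

theorem extFun_castLE {n m : ℕ} (hmn : m ≤ n) (f : Fin m → Fin n) (i : Fin m) :
    extFun hmn f (Fin.castLE hmn i) = f i := by
  simp [extFun]

theorem extFun_of_notMem_range {n m : ℕ} (hmn : m ≤ n) (f : Fin m → Fin n) {j : Fin n}
    (hj : j ∉ Set.range (Fin.castLE hmn)) : extFun hmn f j = j :=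
  dif_neg fun h => hj ⟨⟨j, h⟩, rfl⟩

theorem stmt9_general (Γ : Type*) [CommGroup Γ]
    (n m : ℕ) (hmn : m ≤ n)
    (a : Fin n → Fin n → MonoidAlgebra ℤ Γ) (h : Fin n → Fin n → Γ) :
    Matrix.det
      ((Matrix.of fun i j : Fin n =>
          if i = j then ∑ k ∈ Finset.univ.filter fun k => k ≠ i, a i k
          else - (MonoidAlgebra.of ℤ Γ (h i j) * a i j)).submatrix
        (Fin.castLE hmn) (Fin.castLE hmn)) =
    ∑ f : {f : Fin m → Fin n // ∀ i, f i ≠ Fin.castLE hmn i},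
      (∏ i : Fin m, a (Fin.castLE hmn i) (f.1 i)) *
        ∏ x ∈ cycleReps Fin.val (extFun hmn f.1),
          (1 - MonoidAlgebra.of ℤ Γ
            (∏ t ∈ Finset.range (minimalPeriod (extFun hmn f.1) x),
              h ((extFun hmn f.1)^[t] x) ((extFun hmn f.1)^[t + 1] x))) := by
  refine (det_submatrix_holonomyLaplacian a (fun i j => MonoidAlgebra.of ℤ Γ (h i j))
    (Fin.castLE_injective hmn)).trans ?_
  -- the two sums differ only in the `Fintype` instance on the subtype of forests
  refine Finset.sum_congr (by ext; simp) fun f _ => ?_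
  congr 1
  refine (sum_permWeight_viaFintypeEmbedding (Fin.castLEEmb hmn)
    (fun x y => MonoidAlgebra.of ℤ Γ (h x y)) (extFun_castLE hmn f.1)
    (fun j hj => extFun_of_notMem_range hmn f.1 hj)).trans ?_
  rw [sum_permWeight_agreesOnSupport Fin.val_injective]
  refine prod_congr rfl fun x _ => ?_
  simp only [map_prod, iterate_succ_apply']

theorem stmt9 (Γ : Type*) [CommGroup Γ]
    (n m : ℕ) (hn : 2 ≤ n) (hm : 1 ≤ m) (hmn : m ≤ n)
    (a : Fin n → Fin n → MonoidAlgebra ℤ Γ) (h : Fin n → Fin n → Γ) :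
    Matrix.det
      ((Matrix.of fun i j : Fin n =>
          if i = j then ∑ k ∈ Finset.univ.filter fun k => k ≠ i, a i k
          else - (MonoidAlgebra.of ℤ Γ (h i j) * a i j)).submatrix
        (Fin.castLE hmn) (Fin.castLE hmn)) =
    ∑ f : {f : Fin m → Fin n // ∀ i, f i ≠ Fin.castLE hmn i},
      (∏ i : Fin m, a (Fin.castLE hmn i) (f.1 i)) *
        ∏ x ∈ cycleReps Fin.val (extFun hmn f.1),
          (1 - MonoidAlgebra.of ℤ Γ
            (∏ t ∈ Finset.range (minimalPeriod (extFun hmn f.1) x),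
              h ((extFun hmn f.1)^[t] x) ((extFun hmn f.1)^[t + 1] x))) :=
  stmt9_general Γ n m hmn a h
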